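/- Let A be an n-by-n reciprocal matrix with Perron eigenvalue ρ (the spectral radius). Then ρ ≥ n, and ρ = n if and only if A is consistent. -/

import Mathlib

open Matrix BigOperators Finset

/-- A positive square matrix is reciprocal if `A j i = 1 / A i j` for all `i, j`. -/
def IsReciprocal {n : ℕ} (A : Matrix (Fin n) (Fin n) ℝ) : Prop :=
  (∀ i j, 0 < A i j) ∧ ∀ i j, A j i = 1 / A i j

/-- A reciprocal matrix is consistent if `A i j * A j k = A i k` for all `i, j, k`. -/
def IsConsistent {n : ℕ} (A : Matrix (Fin n) (Fin n) ℝ) : Prop :=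
  IsReciprocal A ∧ ∀ i j k, A i j * A j k = A i k

/-- A vector is positive if all its entries are positive. -/
def PosVec {n : ℕ} (w : Fin n → ℝ) : Prop := ∀ i, 0 < w i

/-- A positive vector `w` is efficient for `A` if any positive vector `v` whose associated
consistent matrix approximates `A` at least as well as that of `w` (entrywise) is a positive
multiple of `w`. -/
def IsEfficient {n : ℕ} (A : Matrix (Fin n) (Fin n) ℝ) (w : Fin n → ℝ) : Prop :=
  PosVec w ∧ ∀ v : Fin n → ℝ, PosVec v →
    (∀ i j, |A i j - v i / v j| ≤ |A i j - w i / w j|) →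
    ∃ c : ℝ, 0 < c ∧ v = c • w

/-- The `i`-th row sum of a matrix. -/
noncomputable def rowSum {n : ℕ} (A : Matrix (Fin n) (Fin n) ℝ) (i : Fin n) : ℝ := ∑ j, A i j

/-- Given the row sums `r` in nonincreasing order (`r 0` the largest), the auxiliary function
`f(x) = 1/x + ∑_{i=2}^{k} 1/(r₁ - rᵢ + x) + 1 - r₁ - x` (note the `i = 1` term of the sum is
`1/x` since `r 0 - r 0 = 0`). -/
noncomputable def auxF {k : ℕ} (r : Fin (k + 1) → ℝ) (x : ℝ) : ℝ :=
  (∑ i, 1 / (r 0 - r i + x)) + 1 - r 0 - x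

/-- A reciprocal matrix `B` is well-behaved if, with row sums `r₁ ≥ ⋯ ≥ r_k`, either
`r₁ - r_k ≥ 1` (type I), or `r₁ - r_k < 1` and `f(1 + r_k - r₁) ≥ 0` (type II). -/
def WellBehaved {k : ℕ} (B : Matrix (Fin (k + 1)) (Fin (k + 1)) ℝ) : Prop :=
  ∃ σ : Equiv.Perm (Fin (k + 1)), Antitone (rowSum B ∘ σ) ∧
    (1 ≤ rowSum B (σ 0) - rowSum B (σ (Fin.last k)) ∨
      (rowSum B (σ 0) - rowSum B (σ (Fin.last k)) < 1 ∧
        0 ≤ auxF (rowSum B ∘ σ) (1 + rowSum B (σ (Fin.last k)) - rowSum B (σ 0))))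

/-!
Rescale `A` by its positive eigenvector: `B i j = A i j * w j / w i` is again reciprocal and all
its row sums equal `ρ`, so its entries add up to `n ρ`. Pairing `B i j` with `B j i = 1 / B i j`,
each pair contributes at least `2`, so `n ρ ≥ n²`, with equality iff every `B i j = 1`, that is
iff `A i j = w i / w j`. Such an `A` is consistent; conversely, consistency gives
`ρ w i = A i j ρ w j` directly from the eigenvalue equation.
-/

/-- `D⁻¹ A D` for `D = diagonal w`. -/
noncomputable def diagConj {n : ℕ} (A : Matrix (Fin n) (Fin n) ℝ) (w : Fin n → ℝ) :
    Matrix (Fin n) (Fin n) ℝ :=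
  fun i j => A i j * w j / w i

lemma two_le_add_of_mul_eq_one {x y : ℝ} (hx : 0 < x) (h : x * y = 1) : 2 ≤ x + y := by
  nlinarith [sq_nonneg (x - 1)]

lemma add_eq_two_iff_of_mul_eq_one {x y : ℝ} (h : x * y = 1) : x + y = 2 ↔ x = 1 := by
  refine ⟨fun hsum => ?_, fun hx => by rw [hx, one_mul] at h; rw [hx, h]; norm_num⟩
  have hsq : (x - 1) ^ 2 = 0 := by linear_combination x * hsum - h
  exact sub_eq_zero.mp (pow_eq_zero_iff two_ne_zero |>.mp hsq)

lemma two_mul_sum_sum_sub_sq {n : ℕ} (B : Matrix (Fin n) (Fin n) ℝ) :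
    2 * (∑ i, ∑ j, B i j - (n : ℝ) ^ 2) = ∑ i, ∑ j, (B i j + B j i - 2) := by
  simp only [sum_sub_distrib, sum_add_distrib, sum_const, card_univ, Fintype.card_fin,
    nsmul_eq_mul]
  rw [sum_comm (f := fun i j => B j i)]
  ring

namespace IsReciprocal

variable {n : ℕ} {B : Matrix (Fin n) (Fin n) ℝ}

lemma mul_symm_eq_one (hB : IsReciprocal B) (i j : Fin n) : B i j * B j i = 1 := by
  rw [hB.2 i j, mul_one_div_cancel (hB.1 i j).ne']

lemma sq_le_sum_sum (hB : IsReciprocal B) : (n : ℝ) ^ 2 ≤ ∑ i, ∑ j, B i j := by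
  have hnonneg : 0 ≤ ∑ i, ∑ j, (B i j + B j i - 2) :=
    sum_nonneg fun i _ => sum_nonneg fun j _ =>
      sub_nonneg.mpr (two_le_add_of_mul_eq_one (hB.1 i j) (hB.mul_symm_eq_one i j))
  linarith [two_mul_sum_sum_sub_sq B]

lemma sum_sum_eq_sq_iff (hB : IsReciprocal B) :
    ∑ i, ∑ j, B i j = (n : ℝ) ^ 2 ↔ ∀ i j, B i j = 1 := by
  have hterm : ∀ i j, 0 ≤ B i j + B j i - 2 := fun i j =>
    sub_nonneg.mpr (two_le_add_of_mul_eq_one (hB.1 i j) (hB.mul_symm_eq_one i j))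
  have hrow : ∀ i, 0 ≤ ∑ j, (B i j + B j i - 2) := fun i => sum_nonneg fun j _ => hterm i j
  calc ∑ i, ∑ j, B i j = (n : ℝ) ^ 2
      ↔ ∑ i, ∑ j, (B i j + B j i - 2) = 0 := by
        rw [← two_mul_sum_sum_sub_sq B]; constructor <;> intro h <;> linarith
    _ ↔ ∀ i j, B i j + B j i - 2 = 0 := by
        simp only [sum_eq_zero_iff_of_nonneg (fun i _ => hrow i),
          sum_eq_zero_iff_of_nonneg (fun j _ => hterm _ j), mem_univ, true_implies]
    _ ↔ ∀ i j, B i j = 1 := by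
        simp only [sub_eq_zero, add_eq_two_iff_of_mul_eq_one (hB.mul_symm_eq_one _ _)]

end IsReciprocal

section Eigenvector

variable {n : ℕ} {A : Matrix (Fin n) (Fin n) ℝ} {w : Fin n → ℝ} {ρ : ℝ}

lemma IsReciprocal.diagConj (hA : IsReciprocal A) (hw : PosVec w) :
    IsReciprocal (diagConj A w) := by
  refine ⟨fun i j => div_pos (mul_pos (hA.1 i j) (hw j)) (hw i), fun i j => ?_⟩
  have := hw i; have := hw j
  simp only [_root_.diagConj, hA.2 i j]
  field_simp

lemma sum_mul_eq_of_mulVec_eq_smul (heig : A *ᵥ w = ρ • w) (i : Fin n) :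
    ∑ j, A i j * w j = ρ * w i := by
  simpa [mulVec, dotProduct] using congrFun heig i

lemma sum_diagConj_eq_of_mulVec_eq_smul (hw : PosVec w) (heig : A *ᵥ w = ρ • w) (i : Fin n) :
    ∑ j, diagConj A w i j = ρ := by
  simp only [_root_.diagConj, ← sum_div, sum_mul_eq_of_mulVec_eq_smul heig i]
  exact mul_div_cancel_right₀ ρ (hw i).ne'

lemma diagConj_eq_one_iff (hw : PosVec w) (i j : Fin n) :
    diagConj A w i j = 1 ↔ A i j = w i / w j := by
  rw [_root_.diagConj, div_eq_one_iff_eq (hw i).ne', eq_div_iff (hw j).ne']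

lemma pos_of_mulVec_eq_smul (hA : ∀ i j, 0 < A i j) (hw : PosVec w) (heig : A *ᵥ w = ρ • w)
    (i : Fin n) : 0 < ρ := by
  have hsum : 0 < ∑ j, A i j * w j :=
    sum_pos (fun j _ => mul_pos (hA i j) (hw j)) ⟨i, mem_univ i⟩
  rw [sum_mul_eq_of_mulVec_eq_smul heig i] at hsum
  exact pos_of_mul_pos_left hsum (hw i).le

lemma IsReciprocal.isConsistent_iff_eq_div (hA : IsReciprocal A) (hw : PosVec w)
    (heig : A *ᵥ w = ρ • w) : IsConsistent A ↔ ∀ i j, A i j = w i / w j := by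
  refine ⟨fun ⟨_, hcons⟩ i j => ?_, fun hdiv => ⟨hA, fun i j k => ?_⟩⟩
  · have hρ := pos_of_mulVec_eq_smul hA.1 hw heig i
    have hrow : ρ * w i = A i j * (ρ * w j) := by
      rw [← sum_mul_eq_of_mulVec_eq_smul heig i, ← sum_mul_eq_of_mulVec_eq_smul heig j, mul_sum]
      exact sum_congr rfl fun k _ => by rw [← hcons i j k, mul_assoc]
    rw [eq_div_iff (hw j).ne']
    nlinarith [mul_pos hρ (hw j)]
  · have := hw j
    rw [hdiv, hdiv, hdiv]
    field_simp

end Eigenvector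

/-- The Perron eigenvalue `ρ` of an `n × n` reciprocal matrix (the eigenvalue of its positive
eigenvector) satisfies `ρ ≥ n`, with `ρ = n` iff the matrix is consistent. -/
theorem stmt8 {n : ℕ} (hn : 0 < n) (A : Matrix (Fin n) (Fin n) ℝ) (hA : IsReciprocal A)
    (ρ : ℝ) (w : Fin n → ℝ) (hw : PosVec w) (heig : A.mulVec w = ρ • w) :
    (n : ℝ) ≤ ρ ∧ (ρ = (n : ℝ) ↔ IsConsistent A) := by
  have hB := hA.diagConj hw
  have hsum : ∑ i, ∑ j, diagConj A w i j = n * ρ := by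
    simp only [sum_diagConj_eq_of_mulVec_eq_smul hw heig, sum_const, card_univ, Fintype.card_fin,
      nsmul_eq_mul]
  have hn' : (0 : ℝ) < n := by exact_mod_cast hn
  refine ⟨?_, ?_⟩
  · have hle := hB.sq_le_sum_sum
    rw [hsum, sq] at hle
    exact le_of_mul_le_mul_left hle hn'
  · calc ρ = n ↔ ∑ i, ∑ j, diagConj A w i j = (n : ℝ) ^ 2 := by
          rw [hsum, sq, mul_right_inj' hn'.ne', eq_comm]
      _ ↔ ∀ i j, A i j = w i / w j := by
          rw [hB.sum_sum_eq_sq_iff]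
          exact forall₂_congr fun i j => diagConj_eq_one_iff hw i j
      _ ↔ IsConsistent A := (hA.isConsistent_iff_eq_div hw heig).symm
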